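/- Lally bound for quasi-twisted codes: Let C ⊆ F_q^{mℓ} be a λ-QT code of index ℓ and co-index m. Fix a basis {1, γ, …, γ^{ℓ−1}} of F_{q^ℓ} over F_q and define τ : F_q^{mℓ} → (F_{q^ℓ})^m by sending a codeword, viewed as an m×ℓ array (c_{k,j}), to (c_0′,…,c_{m−1}′) with c_k′ = Σ_{j=0}^{ℓ−1} c_{k,j} γ^j. Let Ĉ be the smallest λ-constacyclic code of length m over F_{q^ℓ} containing τ(C), and let B ⊆ F_q^ℓ be the F_q-linear span of all rows c_k of all codewords c ∈ C. Then d(C) ≥ d(Ĉ)·d(B). -/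

import Mathlib

open Polynomial

open scoped Classical in
/-- Hamming weight: the number of nonzero coordinates. -/
noncomputable def wt {ι K : Type*} [Fintype ι] [Zero K] (c : ι → K) : ℕ :=
  (Finset.univ.filter fun i => c i ≠ 0).card

/-- Minimum Hamming weight of a nonzero codeword of `S`, with `⊤` for the zero code. -/
noncomputable def minDist {ι K : Type*} [Fintype ι] [Zero K] (S : Set (ι → K)) : ℕ∞ :=
  sInf {n : ℕ∞ | ∃ c ∈ S, c ≠ 0 ∧ (wt c : ℕ∞) = n}

/-- The λ-constashift by ℓ positions on m×ℓ arrays: row 0 becomes λ times old last row. -/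
def rho {Fq : Type*} [Field Fq] (m ℓ : ℕ) [NeZero m] (lam : Fq)
    (c : ZMod m × Fin ℓ → Fq) : ZMod m × Fin ℓ → Fq :=
  fun p => (if p.1 = 0 then lam else 1) * c (p.1 - 1, p.2)

/-- Reduction of a vector of polynomials mod `X^m - λ`, written as an m×ℓ array. -/
noncomputable def arrOf {Fq : Type*} [Field Fq] (m ℓ : ℕ) [NeZero m] (lam : Fq)
    (v : Fin ℓ → Polynomial Fq) : ZMod m × Fin ℓ → Fq :=
  fun p => ((v p.2) %ₘ (Polynomial.X ^ m - Polynomial.C lam)).coeff (p.1).val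

open Finset

/- Encode every row of a codeword `c ∈ C` by one symbol of `F_{q^ℓ}` through the basis
`1, γ, …, γ^{ℓ-1}`. A row is zero exactly when its symbol is, so the encoded word `τ c`
is a nonzero word of `Ĉ` whose weight is the number of nonzero rows of `c`; hence at least
`d(Ĉ)` rows are nonzero. Each nonzero row is a nonzero word of `B`, so it carries at least
`d(B)` nonzero entries, and `wt c ≥ d(Ĉ) · d(B)`. -/

section Weight

variable {ι κ F K : Type*} [Fintype ι] [Fintype κ] [Zero F] [Zero K]

theorem wt_eq_sum_wt_curry (c : ι × κ → F) : wt c = ∑ i, wt (Function.curry c i) := by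
  simp only [wt, card_filter, Fintype.sum_prod_type]
  rfl

theorem minDist_le_wt {S : Set (ι → F)} {c : ι → F} (hc : c ∈ S) (hc0 : c ≠ 0) :
    minDist S ≤ wt c :=
  sInf_le ⟨c, hc, hc0, rfl⟩

theorem le_minDist {S : Set (ι → F)} {n : ℕ∞} (h : ∀ c ∈ S, c ≠ 0 → n ≤ wt c) :
    n ≤ minDist S :=
  le_sInf <| by
    rintro _ ⟨c, hc, hc0, rfl⟩
    exact h c hc hc0

theorem wt_comp_of_eq_zero_iff {M : Type*} [Zero M] {e : M → K} (he : ∀ u, e u = 0 ↔ u = 0)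
    (f : ι → M) : wt (e ∘ f) = wt f := by
  unfold wt
  congr 1
  ext i
  simp [he]

theorem minDist_mul_minDist_le_of_rows_mem {C : Set (ι × κ → F)} {A : Set (ι → K)}
    {B : Set (κ → F)} (e : (κ → F) → K) (he : ∀ u, e u = 0 ↔ u = 0)
    (hA : ∀ c ∈ C, e ∘ Function.curry c ∈ A)
    (hB : ∀ c ∈ C, ∀ i, Function.curry c i ∈ B) :
    minDist A * minDist B ≤ minDist C := by
  classical
  refine le_minDist fun c hc hc0 => ?_
  set S : Finset ι := {i | Function.curry c i ≠ 0}
  have hencode_ne : e ∘ Function.curry c ≠ 0 := by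
    intro h
    apply hc0
    funext ⟨i, j⟩
    exact congrFun ((he _).1 (congrFun h i)) j
  calc minDist A * minDist B ≤ #S * minDist B := by
        gcongr
        calc minDist A ≤ wt (e ∘ Function.curry c) := minDist_le_wt (hA c hc) hencode_ne
          _ = #S := by rw [wt_comp_of_eq_zero_iff he, wt]; congr
    _ ≤ ∑ i ∈ S, (wt (Function.curry c i) : ℕ∞) := by
        rw [← nsmul_eq_mul]
        exact card_nsmul_le_sum S _ _ fun i hi => minDist_le_wt (hB c hc i) (mem_filter.1 hi).2
    _ ≤ ∑ i, (wt (Function.curry c i) : ℕ∞) := sum_le_sum_of_subset (subset_univ S)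
    _ = wt c := by rw [wt_eq_sum_wt_curry]; push_cast; rfl

end Weight

theorem lally_bound_general
    {Fq K : Type*} [Field Fq] [Fintype Fq] [Field K] [Algebra Fq K]
    (m ℓ : ℕ) [NeZero m]
    (lam : Fq)
    (𝓒 : Submodule Fq (ZMod m × Fin ℓ → Fq))
    (γ : K) (bK : Module.Basis (Fin ℓ) Fq K) (hbK : ∀ j : Fin ℓ, bK j = γ ^ (j : ℕ))
    (τ : (ZMod m × Fin ℓ → Fq) → (ZMod m → K))
    (hτ : ∀ c k, τ c k = ∑ j : Fin ℓ, algebraMap Fq K (c (k, j)) * γ ^ (j : ℕ))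
    (Chat : Submodule K (ZMod m → K))
    (hChat : Chat = sInf {D : Submodule K (ZMod m → K) |
      (∀ c ∈ 𝓒, τ c ∈ D) ∧
      ∀ d ∈ D, (fun k => (if k = 0 then algebraMap Fq K lam else 1) * d (k - 1)) ∈ D})
    (B : Submodule Fq (Fin ℓ → Fq))
    (hB : B = Submodule.span Fq {u | ∃ c ∈ 𝓒, ∃ k : ZMod m, u = fun j => c (k, j)}) :
    minDist (Chat : Set (ZMod m → K)) * minDist (B : Set (Fin ℓ → Fq)) ≤
      minDist (𝓒 : Set (ZMod m × Fin ℓ → Fq)) := by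
  have hτ_eq : ∀ c, τ c = bK.equivFun.symm ∘ Function.curry c := by
    intro c
    funext k
    simp only [hτ, Function.comp_apply, Module.Basis.equivFun_symm_apply, hbK, Algebra.smul_def,
      Function.curry_apply]
  refine minDist_mul_minDist_le_of_rows_mem bK.equivFun.symm
    (fun u => map_eq_zero_iff _ bK.equivFun.symm.injective) (fun c hc => ?_) fun c hc k => ?_
  · rw [← hτ_eq c, SetLike.mem_coe, hChat, Submodule.mem_sInf]
    exact fun D hD => hD.1 c hc
  · rw [hB]
    exact Submodule.subset_span ⟨c, hc, k, rfl⟩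

theorem lally_bound
    {Fq K : Type*} [Field Fq] [Fintype Fq] [Field K] [Algebra Fq K]
    (m ℓ : ℕ) [NeZero m] (hcop : Nat.Coprime m (Fintype.card Fq))
    (lam : Fq) (hlam : lam ≠ 0)
    (𝓒 : Submodule Fq (ZMod m × Fin ℓ → Fq))
    (hQT : ∀ c ∈ 𝓒, rho m ℓ lam c ∈ 𝓒)
    (γ : K) (bK : Module.Basis (Fin ℓ) Fq K) (hbK : ∀ j : Fin ℓ, bK j = γ ^ (j : ℕ))
    (τ : (ZMod m × Fin ℓ → Fq) → (ZMod m → K))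
    (hτ : ∀ c k, τ c k = ∑ j : Fin ℓ, algebraMap Fq K (c (k, j)) * γ ^ (j : ℕ))
    (Chat : Submodule K (ZMod m → K))
    (hChat : Chat = sInf {D : Submodule K (ZMod m → K) |
      (∀ c ∈ 𝓒, τ c ∈ D) ∧
      ∀ d ∈ D, (fun k => (if k = 0 then algebraMap Fq K lam else 1) * d (k - 1)) ∈ D})
    (B : Submodule Fq (Fin ℓ → Fq))
    (hB : B = Submodule.span Fq {u | ∃ c ∈ 𝓒, ∃ k : ZMod m, u = fun j => c (k, j)}) :
    minDist (Chat : Set (ZMod m → K)) * minDist (B : Set (Fin ℓ → Fq)) ≤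
      minDist (𝓒 : Set (ZMod m × Fin ℓ → Fq)) :=
  lally_bound_general m ℓ lam 𝓒 γ bK hbK τ hτ Chat hChat B hB
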